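/- arXiv:2012.03328 — 5 statements merged into one kernel-verified Lean document; each statement's English description precedes it below -/
import Mathlib

section
/- Ellipsoid containment via matrix inequality: let Σ be symmetric positive definite, W = {z : zᵀΣ⁻¹z ≤ 1} ⊆ ℝⁿ, and L₁, L₂, L₃ ∈ ℝ^{m×n}. If there exists α ∈ (0,1) such that α⁻¹ L₁ΣL₁ᵀ + (1−α)⁻¹ L₂ΣL₂ᵀ ⪯ L₃ΣL₃ᵀ, then the Minkowski sum L₁W ⊕ L₂W is contained in L₃W. -/
/-!
Factor `Σ = F Fᵀ` with `F` invertible; then `W` is the image of the unit ball under `F`, and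
`Lᵢ W` the image of the unit ball under `Lᵢ F`. Stacking `D = [α^{-1/2} L₁ F, (1-α)^{-1/2} L₂ F]`
and `v = (α^{1/2} w₁, (1-α)^{1/2} w₂)` gives `L₁ F w₁ + L₂ F w₂ = D v` with `|v|² ≤ α + (1-α) = 1`,
while the hypothesis reads `D Dᵀ ⪯ C Cᵀ` for `C = L₃ F`. Douglas' lemma then solves `C w = D v`
with `|w| ≤ |v|`: as `ker Cᵀ ⊆ ker Dᵀ`, `D v = C Cᵀ u` for some `u`, and `w = Cᵀ u` satisfies
`|w|² = ⟪Dᵀ u, v⟫ ≤ |Dᵀ u| |v| ≤ |w| |v|`.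
-/

open Matrix

def ellipsoid {n : ℕ} (S : Matrix (Fin n) (Fin n) ℝ) : Set (Fin n → ℝ) :=
  {z | z ⬝ᵥ (S⁻¹ *ᵥ z) ≤ 1}

namespace LinearMap

variable {𝕜 E F G : Type*} [RCLike 𝕜]
  [NormedAddCommGroup E] [InnerProductSpace 𝕜 E] [FiniteDimensional 𝕜 E]
  [NormedAddCommGroup F] [InnerProductSpace 𝕜 F] [FiniteDimensional 𝕜 F]
  [NormedAddCommGroup G] [InnerProductSpace 𝕜 G] [FiniteDimensional 𝕜 G]
  {A : E →ₗ[𝕜] F} {B : G →ₗ[𝕜] F}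

theorem range_le_range_of_norm_adjoint_le (h : ∀ y, ‖B.adjoint y‖ ≤ ‖A.adjoint y‖) :
    range B ≤ range A := by
  have hker : ker A.adjoint ≤ ker B.adjoint := fun y hy ↦
    norm_le_zero_iff.mp <| (h y).trans_eq <| by rw [mem_ker.mp hy, norm_zero]
  simpa only [orthogonal_ker, adjoint_adjoint] using Submodule.orthogonal_le hker

theorem exists_apply_eq_and_norm_le_of_norm_adjoint_le
    (h : ∀ y, ‖B.adjoint y‖ ≤ ‖A.adjoint y‖) (v : G) :
    ∃ w, A w = B v ∧ ‖w‖ ≤ ‖v‖ := by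
  obtain ⟨u, hu⟩ : B v ∈ range (A ∘ₗ A.adjoint) := by
    rw [range_self_comp_adjoint]
    exact range_le_range_of_norm_adjoint_le h (mem_range_self B v)
  refine ⟨A.adjoint u, hu, ?_⟩
  have hsq : ‖A.adjoint u‖ ^ 2 ≤ ‖A.adjoint u‖ * ‖v‖ := calc
    ‖A.adjoint u‖ ^ 2 = RCLike.re (inner 𝕜 (A.adjoint u) (A.adjoint u)) := norm_sq_eq_re_inner _
    _ = RCLike.re (inner 𝕜 (B.adjoint u) v) := by
      rw [adjoint_inner_left, adjoint_inner_left, ← hu, comp_apply]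
    _ ≤ ‖B.adjoint u‖ * ‖v‖ := re_inner_le_norm _ _
    _ ≤ ‖A.adjoint u‖ * ‖v‖ := by gcongr; exact h u
  nlinarith [norm_nonneg (A.adjoint u), norm_nonneg v]

end LinearMap

lemma EuclideanSpace.norm_toLp_sq {n : Type*} [Fintype n] (x : n → ℝ) :
    ‖WithLp.toLp 2 x‖ ^ 2 = x ⬝ᵥ x := by
  rw [← real_inner_self_eq_norm_sq, EuclideanSpace.inner_toLp_toLp]; rfl

namespace Matrix

variable {m n p : Type*} [Fintype n] [Fintype p]

lemma dotProduct_mul_transpose_mulVec [Fintype m] (B : Matrix m n ℝ) (y : m → ℝ) :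
    y ⬝ᵥ (B * Bᵀ) *ᵥ y = (Bᵀ *ᵥ y) ⬝ᵥ (Bᵀ *ᵥ y) := by
  rw [← mulVec_mulVec, dotProduct_mulVec, ← mulVec_transpose]

theorem exists_mulVec_eq_and_dotProduct_self_le [Fintype m]
    {C : Matrix m n ℝ} {D : Matrix m p ℝ} (h : (C * Cᵀ - D * Dᵀ).PosSemidef) (v : p → ℝ) :
    ∃ w, C *ᵥ w = D *ᵥ v ∧ w ⬝ᵥ w ≤ v ⬝ᵥ v := by
  classical
  have hnorm : ∀ y, ‖(toEuclideanLin D).adjoint y‖ ≤ ‖(toEuclideanLin C).adjoint y‖ := by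
    intro y
    have hy := h.dotProduct_mulVec_nonneg y.ofLp
    rw [star_trivial, sub_mulVec, dotProduct_sub, dotProduct_mul_transpose_mulVec,
      dotProduct_mul_transpose_mulVec, sub_nonneg] at hy
    rw [← toEuclideanLin_conjTranspose_eq_adjoint, ← toEuclideanLin_conjTranspose_eq_adjoint,
      conjTranspose_eq_transpose_of_trivial, conjTranspose_eq_transpose_of_trivial]
    refine (sq_le_sq₀ (norm_nonneg _) (norm_nonneg _)).mp ?_
    rwa [toLpLin_apply, toLpLin_apply, EuclideanSpace.norm_toLp_sq, EuclideanSpace.norm_toLp_sq]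
  obtain ⟨w, hw, hwv⟩ :=
    LinearMap.exists_apply_eq_and_norm_le_of_norm_adjoint_le hnorm (WithLp.toLp 2 v)
  refine ⟨w.ofLp, congrArg WithLp.ofLp hw, ?_⟩
  rw [← EuclideanSpace.norm_toLp_sq, ← EuclideanSpace.norm_toLp_sq]
  gcongr

lemma smul_mul_transpose_smul (c : ℝ) (A : Matrix m n ℝ) :
    (c • A) * (c • A)ᵀ = c ^ 2 • (A * Aᵀ) := by
  rw [transpose_smul, Matrix.smul_mul, Matrix.mul_smul, smul_smul, sq]

theorem exists_mulVec_eq_add_of_posSemidef [Fintype m] {n₁ n₂ : Type*} [Fintype n₁] [Fintype n₂]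
    {A₁ : Matrix m n₁ ℝ} {A₂ : Matrix m n₂ ℝ} {C : Matrix m n ℝ} {α : ℝ}
    (hα : α ∈ Set.Ioo (0 : ℝ) 1)
    (h : (C * Cᵀ - (α⁻¹ • (A₁ * A₁ᵀ) + (1 - α)⁻¹ • (A₂ * A₂ᵀ))).PosSemidef)
    {w₁ : n₁ → ℝ} {w₂ : n₂ → ℝ} (hw₁ : w₁ ⬝ᵥ w₁ ≤ 1) (hw₂ : w₂ ⬝ᵥ w₂ ≤ 1) :
    ∃ w, w ⬝ᵥ w ≤ 1 ∧ A₁ *ᵥ w₁ + A₂ *ᵥ w₂ = C *ᵥ w := by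
  obtain ⟨hα₀, hα₁⟩ := hα
  have hβ₀ : 0 < 1 - α := sub_pos.mpr hα₁
  set D := fromCols ((√α)⁻¹ • A₁) ((√(1 - α))⁻¹ • A₂)
  set v := Sum.elim (√α • w₁) (√(1 - α) • w₂)
  have hDD : D * Dᵀ = α⁻¹ • (A₁ * A₁ᵀ) + (1 - α)⁻¹ • (A₂ * A₂ᵀ) := by
    rw [transpose_fromCols, fromCols_mul_fromRows, smul_mul_transpose_smul,
      smul_mul_transpose_smul, inv_pow, inv_pow, Real.sq_sqrt hα₀.le, Real.sq_sqrt hβ₀.le]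
  have hDv : D *ᵥ v = A₁ *ᵥ w₁ + A₂ *ᵥ w₂ := by
    rw [fromCols_mulVec_sumElim, smul_mulVec, smul_mulVec, mulVec_smul, mulVec_smul,
      smul_smul, smul_smul, inv_mul_cancel₀ (by positivity), inv_mul_cancel₀ (by positivity),
      one_smul, one_smul]
  have hv : v ⬝ᵥ v ≤ 1 := calc
    v ⬝ᵥ v = α * (w₁ ⬝ᵥ w₁) + (1 - α) * (w₂ ⬝ᵥ w₂) := by
      rw [sumElim_dotProduct_sumElim, smul_dotProduct, dotProduct_smul, smul_dotProduct,
        dotProduct_smul, smul_smul, smul_smul, Real.mul_self_sqrt hα₀.le,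
        Real.mul_self_sqrt hβ₀.le, smul_eq_mul, smul_eq_mul]
    _ ≤ α * 1 + (1 - α) * 1 := by gcongr
    _ = 1 := by ring
  obtain ⟨w, hw, hwv⟩ := exists_mulVec_eq_and_dotProduct_self_le (hDD ▸ h) v
  exact ⟨w, hwv.trans hv, by rw [← hDv, hw]⟩

open scoped MatrixOrder in
lemma PosDef.exists_isUnit_and_eq_mul_transpose {k : Type*} [Fintype k] [DecidableEq k]
    {S : Matrix k k ℝ} (hS : S.PosDef) : ∃ F, IsUnit F ∧ S = F * Fᵀ := by
  simpa only [star_eq_conjTranspose, conjTranspose_eq_transpose_of_trivial] using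
    CStarAlgebra.isStrictlyPositive_iff_eq_mul_star_self.mp hS.isStrictlyPositive

end Matrix

lemma mulVec_mem_ellipsoid_mul_transpose_iff {k : ℕ} {F : Matrix (Fin k) (Fin k) ℝ}
    (hF : IsUnit F) (w : Fin k → ℝ) :
    F *ᵥ w ∈ ellipsoid (F * Fᵀ) ↔ w ⬝ᵥ w ≤ 1 := by
  have hdet : IsUnit F.det := (isUnit_iff_isUnit_det F).mp hF
  have hdetT : IsUnit Fᵀ.det := by rwa [det_transpose]
  rw [ellipsoid, Set.mem_ofPred_eq, Matrix.mul_inv_rev, ← mulVec_mulVec, mulVec_mulVec w F⁻¹ F,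
    nonsing_inv_mul F hdet, one_mulVec, ← vecMul_transpose, ← dotProduct_mulVec, mulVec_mulVec,
    mul_nonsing_inv _ hdetT, one_mulVec]

lemma ellipsoid_mul_transpose {k : ℕ} {F : Matrix (Fin k) (Fin k) ℝ} (hF : IsUnit F) :
    ellipsoid (F * Fᵀ) = (F *ᵥ ·) '' {w | w ⬝ᵥ w ≤ 1} := by
  ext z
  obtain ⟨w, rfl⟩ := mulVec_surjective_iff_isUnit.mpr hF z
  rw [mulVec_mem_ellipsoid_mul_transpose_iff hF,
    (mulVec_injective_iff_isUnit.mpr hF).mem_set_image, Set.mem_ofPred_eq]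

/-- Ellipsoid containment via matrix inequality: if there exists α ∈ (0,1) with
α⁻¹L₁ΣL₁ᵀ + (1−α)⁻¹L₂ΣL₂ᵀ ⪯ L₃ΣL₃ᵀ, then L₁W ⊕ L₂W ⊆ L₃W. -/
theorem stmt4 {m n : ℕ} (Sig : Matrix (Fin n) (Fin n) ℝ) (hSig : Sig.PosDef)
    (L1 L2 L3 : Matrix (Fin m) (Fin n) ℝ) (α : ℝ) (hα : α ∈ Set.Ioo (0:ℝ) 1)
    (h : (L3 * Sig * L3ᵀ -
        (α⁻¹ • (L1 * Sig * L1ᵀ) + (1 - α)⁻¹ • (L2 * Sig * L2ᵀ))).PosSemidef) :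
    ∀ z1 ∈ ellipsoid Sig, ∀ z2 ∈ ellipsoid Sig,
      ∃ z3 ∈ ellipsoid Sig, L1 *ᵥ z1 + L2 *ᵥ z2 = L3 *ᵥ z3 := by
  obtain ⟨F, hF, rfl⟩ := hSig.exists_isUnit_and_eq_mul_transpose
  have hfactor : ∀ L : Matrix (Fin m) (Fin n) ℝ, L * (F * Fᵀ) * Lᵀ = (L * F) * (L * F)ᵀ := by
    intro L; simp only [transpose_mul, Matrix.mul_assoc]
  simp only [hfactor] at h
  rw [ellipsoid_mul_transpose hF]
  rintro _ ⟨w1, hw1, rfl⟩ _ ⟨w2, hw2, rfl⟩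
  obtain ⟨w, hw, hsum⟩ := exists_mulVec_eq_add_of_posSemidef hα h hw1 hw2
  exact ⟨F *ᵥ w, ⟨w, hw, rfl⟩, by simpa only [mulVec_mulVec] using hsum⟩
end

section
/- For λ > 0 and any square matrices Y and symmetric positive semidefinite Σ, it holds that (λI − Y)Σ(λI − Y)ᵀ = λ(λΣ − YΣ − ΣYᵀ) + YΣYᵀ, and consequently if β⁻¹PΣPᵀ + (λ−β)⁻¹RΣRᵀ ⪯ λΣ − YΣ − ΣYᵀ for some β ∈ (0, λ), then α⁻¹PΣPᵀ + (1−α)⁻¹RΣRᵀ ⪯ (λI−Y)Σ(λI−Y)ᵀ with α := β/λ. -/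
open Matrix

lemma psd_smul_aux {n : ℕ} {c : ℝ} (hc : 0 ≤ c) {A : Matrix (Fin n) (Fin n) ℝ}
    (hA : A.PosSemidef) : (c • A).PosSemidef := by
  have hAt : Aᵀ = A := (conjTranspose_eq_transpose_of_trivial A) ▸ hA.1.eq
  refine ⟨by simp [Matrix.IsHermitian, conjTranspose_smul, hAt], fun x => ?_⟩
  have := hA.2 x
  have e : (x.sum fun i xi => x.sum fun j xj => star xi * (c • A) i j * xj) =
      c * (x.sum fun i xi => x.sum fun j xj => star xi * A i j * xj) := by
    simp only [Finsupp.sum, Finset.mul_sum, Matrix.smul_apply, smul_eq_mul]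
    exact Finset.sum_congr rfl fun i _ => Finset.sum_congr rfl fun j _ => by ring
  rw [e]
  exact mul_nonneg hc this

/-- (λI − Y)Σ(λI − Y)ᵀ = λ(λΣ − YΣ − ΣYᵀ) + YΣYᵀ; consequently if
β⁻¹PΣPᵀ + (λ−β)⁻¹RΣRᵀ ⪯ λΣ − YΣ − ΣYᵀ with 0 < β < λ, then with α := β/λ,
α⁻¹PΣPᵀ + (1−α)⁻¹RΣRᵀ ⪯ (λI−Y)Σ(λI−Y)ᵀ. -/
theorem stmt9 {n : ℕ} (lam β : ℝ) (hlam : 0 < lam) (hβ : 0 < β) (hβlam : β < lam)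
    (Sig Y P R : Matrix (Fin n) (Fin n) ℝ) (hSig : Sig.PosSemidef) :
    ((lam • (1 : Matrix (Fin n) (Fin n) ℝ) - Y) * Sig *
        (lam • (1 : Matrix (Fin n) (Fin n) ℝ) - Y)ᵀ =
      lam • (lam • Sig - Y * Sig - Sig * Yᵀ) + Y * Sig * Yᵀ) ∧
    ((lam • Sig - Y * Sig - Sig * Yᵀ -
        (β⁻¹ • (P * Sig * Pᵀ) + (lam - β)⁻¹ • (R * Sig * Rᵀ))).PosSemidef →
      ((lam • (1 : Matrix (Fin n) (Fin n) ℝ) - Y) * Sig *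
          (lam • (1 : Matrix (Fin n) (Fin n) ℝ) - Y)ᵀ -
        ((β / lam)⁻¹ • (P * Sig * Pᵀ) +
          (1 - β / lam)⁻¹ • (R * Sig * Rᵀ))).PosSemidef) := by
  have hlam0 : lam ≠ 0 := hlam.ne'
  have key : ((lam • (1 : Matrix (Fin n) (Fin n) ℝ) - Y) * Sig *
        (lam • (1 : Matrix (Fin n) (Fin n) ℝ) - Y)ᵀ =
      lam • (lam • Sig - Y * Sig - Sig * Yᵀ) + Y * Sig * Yᵀ) := by
    simp only [transpose_sub, transpose_smul, transpose_one, sub_mul, mul_sub,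
      Matrix.smul_mul, Matrix.mul_smul, Matrix.one_mul, Matrix.mul_one, smul_sub, smul_smul]
    abel
  refine ⟨key, fun h => ?_⟩
  have h1 : (β / lam)⁻¹ = lam * β⁻¹ := by
    field_simp
  have h2 : (1 - β / lam)⁻¹ = lam * (lam - β)⁻¹ := by
    rw [show (1 : ℝ) - β / lam = (lam - β) / lam by field_simp]
    rw [inv_div]
    ring
  have heq : ((lam • (1 : Matrix (Fin n) (Fin n) ℝ) - Y) * Sig *
          (lam • (1 : Matrix (Fin n) (Fin n) ℝ) - Y)ᵀ -
        ((β / lam)⁻¹ • (P * Sig * Pᵀ) +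
          (1 - β / lam)⁻¹ • (R * Sig * Rᵀ))) =
      lam • (lam • Sig - Y * Sig - Sig * Yᵀ -
        (β⁻¹ • (P * Sig * Pᵀ) + (lam - β)⁻¹ • (R * Sig * Rᵀ))) + Y * Sig * Yᵀ := by
    rw [key, h1, h2]
    simp only [smul_sub, smul_add, smul_smul]
    abel
  rw [heq]
  have hY : (Y * Sig * Yᵀ).PosSemidef := by
    simpa using hSig.mul_mul_conjTranspose_same Y
  exact (psd_smul_aux hlam.le h).add hY
end

section
/- Block sparsity invariance under multiplication: let 𝒬 be the set of N×N block matrices Q (with blocks indexed by pairs (i,j)) such that Q_{ij} = 0 unless j ∈ C(i), where C : {1,…,N} → 2^{{1,…,N}} is a set-valued map, and let 𝒴 be the set of block matrices Y with Y_{ij} = 0 whenever C⁺(i) ⊄ C⁺(j), where C⁺(i) := {k : i ∈ C(k)}. Then for any Q ∈ 𝒬 and Y ∈ 𝒴, the product QY belongs to 𝒬. -/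
/-- Block sparsity invariance under multiplication: if Q has block (i,j) zero unless
j ∈ C(i), and Y has block (i,j) zero whenever C⁺(i) ⊄ C⁺(j) (where C⁺(i) = {k : i ∈ C(k)}),
then QY has block (i,j) zero unless j ∈ C(i). -/
theorem stmt12 {N : ℕ} (p q : Fin N → ℕ) (C : Fin N → Set (Fin N))
    (Q : Matrix ((i : Fin N) × Fin (p i)) ((j : Fin N) × Fin (q j)) ℝ)
    (Y : Matrix ((j : Fin N) × Fin (q j)) ((j : Fin N) × Fin (q j)) ℝ)
    (hQ : ∀ (i j : Fin N), j ∉ C i → ∀ (a : Fin (p i)) (b : Fin (q j)), Q ⟨i, a⟩ ⟨j, b⟩ = 0)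
    (hY : ∀ (i j : Fin N), ¬ ({k | i ∈ C k} ⊆ {k | j ∈ C k}) →
      ∀ (a : Fin (q i)) (b : Fin (q j)), Y ⟨i, a⟩ ⟨j, b⟩ = 0) :
    ∀ (i j : Fin N), j ∉ C i → ∀ (a : Fin (p i)) (b : Fin (q j)), (Q * Y) ⟨i, a⟩ ⟨j, b⟩ = 0 := by
  intro i j hj a b
  rw [Matrix.mul_apply]
  apply Finset.sum_eq_zero
  rintro ⟨k, c⟩ -
  by_cases hk : k ∈ C i
  · have : ¬ ({m | k ∈ C m} ⊆ {m | j ∈ C m}) := by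
      intro hsub
      exact hj (hsub hk)
    rw [hY k j this c b, mul_zero]
  · rw [hQ i k hk a c, zero_mul]
end

section
/- Given the sufficient LMI conditions, the ellipsoidal contract containment holds: if Σ ≻ 0, λ ≥ 1, 0 ≤ β ≤ λ with 0 < β < λ, Π is a linear projection matrix, and the block matrix [[Π(λΣ − YΣ − ΣYᵀ)Πᵀ, ΠP, ΠR],[PᵀΠᵀ, βΣ⁻¹, 0],[RᵀΠᵀ, 0, (λ−β)Σ⁻¹]] is positive semidefinite, then Π(x̄ ⊕ PW ⊕ RW) ⊆ Π(v̄ ⊕ (λI−Y)W) whenever Π(x̄ − v̄) = 0, where W = {z : zᵀΣ⁻¹z ≤ 1}. -/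
/-!
`Π(λI - Y)W` is compact and convex, so by Hahn–Banach it suffices to bound `η ⬝ Π(P w₁ + R w₂)`,
for every direction `η`, by the support function of `Π(λI - Y)W`; the support function of `W`
in direction `q` is `√(qᵀΣq)`. With `x = PᵀΠᵀη` and `y = RᵀΠᵀη` the left side is at most
`√(xᵀΣx) + √(yᵀΣy) ≤ √(λ (xᵀΣx/β + yᵀΣy/(λ-β)))` (weighted Cauchy–Schwarz). The Schur
complement of the LMI bounds the bracket by `ηᵀΠ(λΣ - YΣ - ΣYᵀ)Πᵀη`, and the identity
`(λI - Y)Σ(λI - Y)ᵀ = λ(λΣ - YΣ - ΣYᵀ) + YΣYᵀ` bounds `λ` times that by the support value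
`ηᵀΠ(λI - Y)Σ(λI - Y)ᵀΠᵀη` under the square root.
-/

open Matrix

theorem Matrix.PosSemidef.sq_dotProduct_mulVec_le {ι : Type*} [Fintype ι]
    {N : Matrix ι ι ℝ} (hN : N.PosSemidef) (x y : ι → ℝ) :
    (x ⬝ᵥ N *ᵥ y) ^ 2 ≤ (x ⬝ᵥ N *ᵥ x) * (y ⬝ᵥ N *ᵥ y) := by
  classical
  open scoped MatrixOrder in
  obtain ⟨B, rfl⟩ := CStarAlgebra.nonneg_iff_eq_star_mul_self.mp hN.nonneg
  have hB (u v : ι → ℝ) : u ⬝ᵥ (star B * B) *ᵥ v = (B *ᵥ u) ⬝ᵥ (B *ᵥ v) := by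
    rw [← mulVec_mulVec, dotProduct_mulVec, star_eq_conjTranspose,
      conjTranspose_eq_transpose_of_trivial, vecMul_transpose]
  rw [hB, hB, hB]
  simpa only [dotProduct, sq] using
    Finset.sum_mul_sq_le_sq_mul_sq Finset.univ (B *ᵥ x) (B *ᵥ y)

theorem vecMul_dotProduct_mulVec_vecMul {ι κ : Type*} [Fintype ι] [Fintype κ]
    (K : Matrix ι κ ℝ) (S : Matrix κ κ ℝ) (η : ι → ℝ) :
    (η ᵥ* K) ⬝ᵥ S *ᵥ (η ᵥ* K) = η ⬝ᵥ (K * S * Kᵀ) *ᵥ η := by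
  rw [← mulVec_mulVec, ← mulVec_mulVec, mulVec_transpose, dotProduct_mulVec η K]

theorem div_add_div_le_of_posSemidef_fromBlocks {ι κ : Type*} [Fintype ι] [Fintype κ]
    [DecidableEq κ] {A : Matrix ι ι ℝ} {B C : Matrix ι κ ℝ} {S : Matrix κ κ ℝ}
    (hS : IsUnit S.det) {β γ : ℝ} (hβ : β ≠ 0) (hγ : γ ≠ 0)
    (h : (fromBlocks A (fromCols B C) (fromRows Bᵀ Cᵀ)
      (fromBlocks (β • S⁻¹) 0 0 (γ • S⁻¹))).PosSemidef) (η : ι → ℝ) :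
    (η ᵥ* B) ⬝ᵥ S *ᵥ (η ᵥ* B) / β + (η ᵥ* C) ⬝ᵥ S *ᵥ (η ᵥ* C) / γ ≤ η ⬝ᵥ A *ᵥ η := by
  set x := η ᵥ* B
  set y := η ᵥ* C
  have hSinv (v : κ → ℝ) : S⁻¹ *ᵥ (S *ᵥ v) = v := by
    rw [mulVec_mulVec, nonsing_inv_mul _ hS, one_mulVec]
  have htest := h.dotProduct_mulVec_nonneg
    (Sum.elim η (Sum.elim (-β⁻¹ • (S *ᵥ x)) (-γ⁻¹ • (S *ᵥ y))))
  simp only [star_trivial, fromBlocks_mulVec, fromCols_mulVec_sumElim, fromRows_mulVec,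
    sumElim_dotProduct_sumElim, mulVec_smul, smul_mulVec, zero_mulVec, add_zero,
    dotProduct_add, smul_dotProduct, dotProduct_smul, smul_eq_mul, Sum.elim_comp_inl,
    Sum.elim_comp_inr, hSinv, mulVec_transpose, dotProduct_mulVec η B, dotProduct_mulVec η C,
    dotProduct_comm (S *ᵥ _), dotProduct_zero, mul_zero] at htest
  have hβ' (t : ℝ) : -β⁻¹ * (β * (-β⁻¹ * t)) = β⁻¹ * t := by field_simp
  have hγ' (t : ℝ) : -γ⁻¹ * (γ * (-γ⁻¹ * t)) = γ⁻¹ * t := by field_simp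
  rw [hβ', hγ'] at htest
  rw [div_eq_inv_mul, div_eq_inv_mul]
  linarith

theorem sqrt_add_sqrt_le {a b s t : ℝ} (ha : 0 ≤ a) (hb : 0 ≤ b) (hs : 0 < s) (ht : 0 < t) :
    √a + √b ≤ √((s + t) * (a / s + b / t)) := by
  obtain ⟨x, hx, rfl⟩ : ∃ x, 0 ≤ x ∧ a = x ^ 2 := ⟨√a, Real.sqrt_nonneg _, (Real.sq_sqrt ha).symm⟩
  obtain ⟨y, hy, rfl⟩ : ∃ y, 0 ≤ y ∧ b = y ^ 2 := ⟨√b, Real.sqrt_nonneg _, (Real.sq_sqrt hb).symm⟩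
  rw [Real.sqrt_sq hx, Real.sqrt_sq hy, Real.le_sqrt (by positivity) (by positivity),
    div_add_div _ _ hs.ne' ht.ne', mul_div_assoc', le_div_iff₀ (by positivity)]
  nlinarith [sq_nonneg (t * x - s * y)]

theorem mem_of_forall_exists_dotProduct_le {ι : Type*} [Fintype ι] {S : Set (ι → ℝ)}
    (hconv : Convex ℝ S) (hclosed : IsClosed S) {p : ι → ℝ}
    (h : ∀ η : ι → ℝ, ∃ s ∈ S, η ⬝ᵥ p ≤ η ⬝ᵥ s) : p ∈ S := by
  classical
  by_contra hp
  obtain ⟨f, u, hfS, hfp⟩ := geometric_hahn_banach_closed_point hconv hclosed hp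
  set η : ι → ℝ := fun i => f fun j => if i = j then 1 else 0
  have hf (v : ι → ℝ) : f v = η ⬝ᵥ v := by
    rw [← ContinuousLinearMap.coe_coe, LinearMap.pi_apply_eq_sum_univ, dotProduct]
    simp only [smul_eq_mul, ContinuousLinearMap.coe_coe, η, mul_comm]
  obtain ⟨s, hs, hps⟩ := h η
  linarith [hfS s hs, hf s, hf p]

section Ellipsoid

variable {n : ℕ} {Sig : Matrix (Fin n) (Fin n) ℝ}

theorem sq_dotProduct_le_of_mem_ellipsoid (hSig : Sig.PosDef) {w : Fin n → ℝ}
    (hw : w ∈ ellipsoid Sig) (q : Fin n → ℝ) : (q ⬝ᵥ w) ^ 2 ≤ q ⬝ᵥ Sig *ᵥ q := by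
  set u := Sig⁻¹ *ᵥ w
  have hu : Sig *ᵥ u = w := by
    rw [mulVec_mulVec, mul_nonsing_inv _ hSig.det_pos.ne'.isUnit, one_mulVec]
  have huu : u ⬝ᵥ Sig *ᵥ u ≤ 1 := by rw [hu, dotProduct_comm]; exact hw
  calc (q ⬝ᵥ w) ^ 2 = (q ⬝ᵥ Sig *ᵥ u) ^ 2 := by rw [hu]
    _ ≤ (q ⬝ᵥ Sig *ᵥ q) * (u ⬝ᵥ Sig *ᵥ u) := hSig.posSemidef.sq_dotProduct_mulVec_le q u
    _ ≤ q ⬝ᵥ Sig *ᵥ q :=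
      mul_le_of_le_one_right (hSig.posSemidef.dotProduct_mulVec_nonneg q) huu

theorem dotProduct_le_sqrt_of_mem_ellipsoid (hSig : Sig.PosDef) {w : Fin n → ℝ}
    (hw : w ∈ ellipsoid Sig) (q : Fin n → ℝ) : q ⬝ᵥ w ≤ √(q ⬝ᵥ Sig *ᵥ q) :=
  (le_abs_self _).trans (Real.abs_le_sqrt (sq_dotProduct_le_of_mem_ellipsoid hSig hw q))

theorem mem_ellipsoid_iff (hSig : Sig.PosDef) {w : Fin n → ℝ} :
    w ∈ ellipsoid Sig ↔ ∀ q, q ⬝ᵥ w ≤ √(q ⬝ᵥ Sig *ᵥ q) := by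
  refine ⟨dotProduct_le_sqrt_of_mem_ellipsoid hSig, fun h => ?_⟩
  have hq := h (Sig⁻¹ *ᵥ w)
  rw [mulVec_mulVec, mul_nonsing_inv _ hSig.det_pos.ne'.isUnit, one_mulVec,
    dotProduct_comm] at hq
  exact not_lt.mp fun h1 => (Real.sqrt_lt_self_iff.mpr h1).not_ge hq

theorem exists_mem_ellipsoid_dotProduct_eq_sqrt (hSig : Sig.PosDef) (q : Fin n → ℝ) :
    ∃ z ∈ ellipsoid Sig, q ⬝ᵥ z = √(q ⬝ᵥ Sig *ᵥ q) := by
  rcases eq_or_ne q 0 with rfl | hq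
  · exact ⟨0, by simp [ellipsoid], by simp⟩
  set a := q ⬝ᵥ Sig *ᵥ q
  have ha : 0 < a := hSig.dotProduct_mulVec_pos hq
  have hsa : √a * √a = a := Real.mul_self_sqrt ha.le
  have hback : Sig⁻¹ *ᵥ (Sig *ᵥ q) = q := by
    rw [mulVec_mulVec, nonsing_inv_mul _ hSig.det_pos.ne'.isUnit, one_mulVec]
  refine ⟨(√a)⁻¹ • (Sig *ᵥ q), ?_, ?_⟩
  · have hqa : (Sig *ᵥ q) ⬝ᵥ q = a := dotProduct_comm _ _
    simp only [ellipsoid, Set.mem_ofPred_eq, mulVec_smul, hback, smul_dotProduct,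
      dotProduct_smul, hqa, smul_eq_mul]
    rw [← mul_assoc, ← mul_inv, hsa, inv_mul_cancel₀ ha.ne']
  · rw [dotProduct_smul, smul_eq_mul, inv_mul_eq_iff_eq_mul₀ (Real.sqrt_pos.mpr ha).ne', hsa]

theorem convex_ellipsoid (hSig : Sig.PosDef) : Convex ℝ (ellipsoid Sig) := by
  intro x hx y hy a b ha hb hab
  rw [mem_ellipsoid_iff hSig] at hx hy ⊢
  intro q
  calc q ⬝ᵥ (a • x + b • y) = a * (q ⬝ᵥ x) + b * (q ⬝ᵥ y) := by
        simp only [dotProduct_add, dotProduct_smul, smul_eq_mul]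
    _ ≤ a * √(q ⬝ᵥ Sig *ᵥ q) + b * √(q ⬝ᵥ Sig *ᵥ q) := by gcongr <;> simp [*]
    _ = √(q ⬝ᵥ Sig *ᵥ q) := by rw [← add_mul, hab, one_mul]

theorem isCompact_ellipsoid (hSig : Sig.PosDef) : IsCompact (ellipsoid Sig) := by
  have hclosed : IsClosed (ellipsoid Sig) := isClosed_le (by fun_prop) continuous_const
  set c : Fin n → ℝ := fun i => √(Sig i i)
  have hbdd : ellipsoid Sig ⊆ Set.Icc (-c) c := fun w hw => by
    have hi (i) : |w i| ≤ c i := by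
      simpa using Real.abs_le_sqrt (sq_dotProduct_le_of_mem_ellipsoid hSig hw (Pi.single i 1))
    exact ⟨fun i => (abs_le.mp (hi i)).1, fun i => (abs_le.mp (hi i)).2⟩
  exact Metric.isCompact_of_isClosed_isBounded hclosed ((Metric.isBounded_Icc _ _).subset hbdd)

end Ellipsoid

theorem dotProduct_le_sqrt_of_posSemidef_fromBlocks {m n : ℕ}
    {Sig : Matrix (Fin n) (Fin n) ℝ} (hSig : Sig.PosDef)
    {P R Y : Matrix (Fin n) (Fin n) ℝ} {Pim : Matrix (Fin m) (Fin n) ℝ}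
    {lam β : ℝ} (hβ : 0 < β) (hβlam : β < lam)
    (hLMI : (Matrix.fromBlocks
        (Pim * (lam • Sig - Y * Sig - Sig * Yᵀ) * Pimᵀ)
        (Matrix.fromCols (Pim * P) (Pim * R))
        (Matrix.fromRows (Pim * P)ᵀ (Pim * R)ᵀ)
        (Matrix.fromBlocks (β • Sig⁻¹) 0 0 ((lam - β) • Sig⁻¹))).PosSemidef)
    {w1 w2 : Fin n → ℝ} (hw1 : w1 ∈ ellipsoid Sig) (hw2 : w2 ∈ ellipsoid Sig)
    (η : Fin m → ℝ) :
    η ⬝ᵥ Pim *ᵥ (P *ᵥ w1 + R *ᵥ w2) ≤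
      √((η ᵥ* (Pim * (lam • 1 - Y))) ⬝ᵥ Sig *ᵥ (η ᵥ* (Pim * (lam • 1 - Y)))) := by
  set A := Pim * (lam • Sig - Y * Sig - Sig * Yᵀ) * Pimᵀ
  set x := η ᵥ* (Pim * P)
  set y := η ᵥ* (Pim * R)
  have hpsd (v : Fin n → ℝ) : 0 ≤ v ⬝ᵥ Sig *ᵥ v := by
    simpa using hSig.posSemidef.dotProduct_mulVec_nonneg v
  have hlmi : x ⬝ᵥ Sig *ᵥ x / β + y ⬝ᵥ Sig *ᵥ y / (lam - β) ≤ η ⬝ᵥ A *ᵥ η :=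
    div_add_div_le_of_posSemidef_fromBlocks hSig.det_pos.ne'.isUnit hβ.ne'
      (sub_pos.mpr hβlam).ne' hLMI η
  have hsplit : Pim * (lam • 1 - Y) * Sig * (Pim * (lam • 1 - Y))ᵀ =
      lam • A + Pim * Y * Sig * (Pim * Y)ᵀ := by
    simp only [A, transpose_mul, transpose_sub, transpose_smul, Matrix.mul_sub,
      Matrix.sub_mul, Matrix.mul_smul, Matrix.smul_mul, Matrix.mul_one,
      Matrix.mul_assoc, smul_sub, smul_smul]
    abel
  calc η ⬝ᵥ Pim *ᵥ (P *ᵥ w1 + R *ᵥ w2) = x ⬝ᵥ w1 + y ⬝ᵥ w2 := by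
        rw [mulVec_add, dotProduct_add, mulVec_mulVec, mulVec_mulVec, dotProduct_mulVec,
          dotProduct_mulVec]
    _ ≤ √(x ⬝ᵥ Sig *ᵥ x) + √(y ⬝ᵥ Sig *ᵥ y) :=
        add_le_add (dotProduct_le_sqrt_of_mem_ellipsoid hSig hw1 x)
          (dotProduct_le_sqrt_of_mem_ellipsoid hSig hw2 y)
    _ ≤ √((β + (lam - β)) * (x ⬝ᵥ Sig *ᵥ x / β + y ⬝ᵥ Sig *ᵥ y / (lam - β))) :=
        sqrt_add_sqrt_le (hpsd x) (hpsd y) hβ (sub_pos.mpr hβlam)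
    _ ≤ √(lam * (η ⬝ᵥ A *ᵥ η)) := by
        rw [add_sub_cancel]
        gcongr
        linarith
    _ ≤ _ := by
        rw [vecMul_dotProduct_mulVec_vecMul, hsplit, add_mulVec, dotProduct_add, smul_mulVec,
          dotProduct_smul, smul_eq_mul, ← vecMul_dotProduct_mulVec_vecMul (Pim * Y)]
        exact Real.sqrt_le_sqrt (le_add_of_nonneg_right (hpsd _))

theorem stmt13_general {m n : ℕ} (Sig : Matrix (Fin n) (Fin n) ℝ) (hSig : Sig.PosDef)
    (P R Y : Matrix (Fin n) (Fin n) ℝ) (xbar vbar : Fin n → ℝ)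
    (Pim : Matrix (Fin m) (Fin n) ℝ)
    (lam β : ℝ) (hβ : 0 < β) (hβlam : β < lam)
    (hLMI : (Matrix.fromBlocks
        (Pim * (lam • Sig - Y * Sig - Sig * Yᵀ) * Pimᵀ)
        (Matrix.fromCols (Pim * P) (Pim * R))
        (Matrix.fromRows (Pim * P)ᵀ (Pim * R)ᵀ)
        (Matrix.fromBlocks (β • Sig⁻¹) 0 0 ((lam - β) • Sig⁻¹))).PosSemidef)
    (hcenter : Pim *ᵥ (xbar - vbar) = 0) :
    ∀ w1 ∈ ellipsoid Sig, ∀ w2 ∈ ellipsoid Sig,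
      ∃ z ∈ ellipsoid Sig,
        Pim *ᵥ (xbar + P *ᵥ w1 + R *ᵥ w2) =
          Pim *ᵥ (vbar + (lam • (1 : Matrix (Fin n) (Fin n) ℝ) - Y) *ᵥ z) := by
  intro w1 hw1 w2 hw2
  set K := Pim * (lam • (1 : Matrix (Fin n) (Fin n) ℝ) - Y)
  have hmem : Pim *ᵥ (P *ᵥ w1 + R *ᵥ w2) ∈ (K *ᵥ ·) '' ellipsoid Sig := by
    refine mem_of_forall_exists_dotProduct_le ((convex_ellipsoid hSig).linear_image K.mulVecLin)
      ((isCompact_ellipsoid hSig).image K.mulVecLin.continuous_of_finiteDimensional).isClosed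
      fun η => ?_
    obtain ⟨z, hz, hηz⟩ := exists_mem_ellipsoid_dotProduct_eq_sqrt hSig (η ᵥ* K)
    refine ⟨K *ᵥ z, ⟨z, hz, rfl⟩, ?_⟩
    rw [dotProduct_mulVec η K, hηz]
    exact dotProduct_le_sqrt_of_posSemidef_fromBlocks hSig hβ hβlam hLMI hw1 hw2 η
  obtain ⟨z, hz, hKz⟩ := hmem
  refine ⟨z, hz, ?_⟩
  rw [mulVec_sub, sub_eq_zero] at hcenter
  rw [add_assoc, mulVec_add, ← hKz, hcenter, mulVec_add, mulVec_mulVec]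

/-- Sufficient LMI conditions imply the ellipsoidal contract containment:
if Σ ≻ 0, λ ≥ 1, 0 < β < λ, the block matrix
[[Π(λΣ − YΣ − ΣYᵀ)Πᵀ, ΠP, ΠR],[PᵀΠᵀ, βΣ⁻¹, 0],[RᵀΠᵀ, 0, (λ−β)Σ⁻¹]] is PSD, and
Π(x̄ − v̄) = 0, then Π(x̄ ⊕ PW ⊕ RW) ⊆ Π(v̄ ⊕ (λI−Y)W). -/
theorem stmt13 {m n : ℕ} (Sig : Matrix (Fin n) (Fin n) ℝ) (hSig : Sig.PosDef)
    (P R Y : Matrix (Fin n) (Fin n) ℝ) (xbar vbar : Fin n → ℝ)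
    (Pim : Matrix (Fin m) (Fin n) ℝ)
    (lam β : ℝ) (hlam : 1 ≤ lam) (hβ : 0 < β) (hβlam : β < lam)
    (hLMI : (Matrix.fromBlocks
        (Pim * (lam • Sig - Y * Sig - Sig * Yᵀ) * Pimᵀ)
        (Matrix.fromCols (Pim * P) (Pim * R))
        (Matrix.fromRows (Pim * P)ᵀ (Pim * R)ᵀ)
        (Matrix.fromBlocks (β • Sig⁻¹) 0 0 ((lam - β) • Sig⁻¹))).PosSemidef)
    (hcenter : Pim *ᵥ (xbar - vbar) = 0) :
    ∀ w1 ∈ ellipsoid Sig, ∀ w2 ∈ ellipsoid Sig,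
      ∃ z ∈ ellipsoid Sig,
        Pim *ᵥ (xbar + P *ᵥ w1 + R *ᵥ w2) =
          Pim *ᵥ (vbar + (lam • (1 : Matrix (Fin n) (Fin n) ℝ) - Y) *ᵥ z) :=
  stmt13_general Sig hSig P R Y xbar vbar Pim lam β hβ hβlam hLMI hcenter
end

section
/- Let Σ ≻ 0, let W = {z : zᵀΣ⁻¹z ≤ 1}, and let L, M be m×n matrices with M of full row rank. If LΣLᵀ ⪯ MΣMᵀ, then LW ⊆ MW. -/
open Matrix

/-- If Σ ≻ 0, M has full row rank, and LΣLᵀ ⪯ MΣMᵀ, then LW ⊆ MW where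
W = {z : zᵀΣ⁻¹z ≤ 1}. -/
theorem stmt16 {m n : ℕ} (Sig : Matrix (Fin n) (Fin n) ℝ) (hSig : Sig.PosDef)
    (L M : Matrix (Fin m) (Fin n) ℝ) (hrank : M.rank = m) (hmn : m ≤ n)
    (h : (M * Sig * Mᵀ - L * Sig * Lᵀ).PosSemidef) :
    (L *ᵥ ·) '' ellipsoid Sig ⊆ (M *ᵥ ·) '' ellipsoid Sig := by
  have move : ∀ (A : Matrix (Fin n) (Fin n) ℝ), Aᵀ = A →
      ∀ u v : Fin n → ℝ, u ⬝ᵥ (A *ᵥ v) = (A *ᵥ u) ⬝ᵥ v := by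
    intro A hA u v
    rw [Matrix.dotProduct_mulVec, ← Matrix.mulVec_transpose, hA]
  have hsymm : Sigᵀ = Sig := hSig.isHermitian.eq
  -- injectivity of Mᵀ *ᵥ ·
  have hrt : Mᵀ.rank = m := by rw [Matrix.rank_transpose]; exact hrank
  have hker : LinearMap.ker Mᵀ.mulVecLin = ⊥ := by
    have h1 := Mᵀ.mulVecLin.finrank_range_add_finrank_ker
    rw [Matrix.rank] at hrt
    have h3 : Module.finrank ℝ (Fin m → ℝ) = m := by simp
    rw [hrt, h3] at h1
    have h2 : Module.finrank ℝ (LinearMap.ker Mᵀ.mulVecLin) = 0 := by omega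
    exact Submodule.finrank_eq_zero.mp h2
  have hinj : ∀ x : Fin m → ℝ, Mᵀ *ᵥ x = 0 → x = 0 := by
    intro x hx
    have := LinearMap.ker_eq_bot.mp hker
    exact this (by simpa [Matrix.mulVecLin_apply, Matrix.mulVec_transpose] using hx)
  set G : Matrix (Fin m) (Fin m) ℝ := M * Sig * Mᵀ with hGdef
  have hGsymm : Gᵀ = G := by
    rw [hGdef, Matrix.transpose_mul, Matrix.transpose_mul, Matrix.transpose_transpose, hsymm,
      Matrix.mul_assoc]
  have hGpd : G.PosDef := by
    refine Matrix.PosDef.of_dotProduct_mulVec_pos (by simpa [Matrix.IsHermitian] using hGsymm) ?_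
    intro x hx
    have hMx : Mᵀ *ᵥ x ≠ 0 := fun hc => hx (hinj x hc)
    have hp := hSig.dotProduct_mulVec_pos hMx
    simp only [star_trivial] at hp ⊢
    calc (0:ℝ) < (Mᵀ *ᵥ x) ⬝ᵥ (Sig *ᵥ (Mᵀ *ᵥ x)) := hp
    _ = x ⬝ᵥ (G *ᵥ x) := by
        rw [hGdef, ← Matrix.mulVec_mulVec, ← Matrix.mulVec_mulVec,
          Matrix.dotProduct_mulVec x, ← Matrix.mulVec_transpose]
  have hGdet : IsUnit G.det := isUnit_iff_ne_zero.mpr hGpd.det_pos.ne'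
  have hSdet : IsUnit Sig.det := isUnit_iff_ne_zero.mpr hSig.det_pos.ne'
  rintro y ⟨x, hx, rfl⟩
  set a : Fin m → ℝ := G⁻¹ *ᵥ (L *ᵥ x) with hadef
  have hGa : G *ᵥ a = L *ᵥ x := by
    rw [hadef, Matrix.mulVec_mulVec, Matrix.mul_nonsing_inv _ hGdet, Matrix.one_mulVec]
  refine ⟨Sig *ᵥ (Mᵀ *ᵥ a), ?_, ?_⟩
  · -- membership in ellipsoid
    have hSinv : Sig⁻¹ *ᵥ (Sig *ᵥ (Mᵀ *ᵥ a)) = Mᵀ *ᵥ a := by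
      rw [Matrix.mulVec_mulVec, Matrix.nonsing_inv_mul _ hSdet, Matrix.one_mulVec]
    show (Sig *ᵥ (Mᵀ *ᵥ a)) ⬝ᵥ (Sig⁻¹ *ᵥ (Sig *ᵥ (Mᵀ *ᵥ a))) ≤ 1
    rw [hSinv]
    -- (Σ w0) ⬝ᵥ w0 = a ⬝ᵥ (G *ᵥ a) = a ⬝ᵥ (L *ᵥ x)
    have e1 : (Sig *ᵥ (Mᵀ *ᵥ a)) ⬝ᵥ (Mᵀ *ᵥ a) = a ⬝ᵥ (L *ᵥ x) := by
      rw [← move Sig hsymm, ← hGa, hGdef, ← Matrix.mulVec_mulVec, ← Matrix.mulVec_mulVec,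
        Matrix.dotProduct_mulVec a, ← Matrix.mulVec_transpose]
    rw [e1]
    -- key inequality : a ⬝ᵥ (L *ᵥ x) ≤ x ⬝ᵥ (Sig⁻¹ *ᵥ x)
    have hSS : Sig *ᵥ (Sig⁻¹ *ᵥ x) = x := by
      rw [Matrix.mulVec_mulVec, Matrix.mul_nonsing_inv _ hSdet, Matrix.one_mulVec]
    set s : Fin n → ℝ := Sig⁻¹ *ᵥ x with hsdef
    set w : Fin n → ℝ := s - Lᵀ *ᵥ a with hwdef
    have t1 : (0:ℝ) ≤ w ⬝ᵥ (Sig *ᵥ w) := by simpa using hSig.posSemidef.dotProduct_mulVec_nonneg w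
    have t2 : (0:ℝ) ≤ a ⬝ᵥ ((G - L * Sig * Lᵀ) *ᵥ a) := by simpa using h.dotProduct_mulVec_nonneg a
    have expand : w ⬝ᵥ (Sig *ᵥ w) + a ⬝ᵥ ((G - L * Sig * Lᵀ) *ᵥ a)
        = x ⬝ᵥ s - a ⬝ᵥ (L *ᵥ x) := by
      have e2 : s ⬝ᵥ (Sig *ᵥ s) = x ⬝ᵥ s := by rw [move Sig hsymm, hSS]
      have e3 : s ⬝ᵥ (Sig *ᵥ (Lᵀ *ᵥ a)) = a ⬝ᵥ (L *ᵥ x) := by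
        rw [move Sig hsymm, hSS, Matrix.dotProduct_mulVec x, ← Matrix.mulVec_transpose,
          Matrix.transpose_transpose, dotProduct_comm]
      have e4 : (Lᵀ *ᵥ a) ⬝ᵥ (Sig *ᵥ s) = a ⬝ᵥ (L *ᵥ x) := by
        rw [hSS, dotProduct_comm, Matrix.dotProduct_mulVec x, ← Matrix.mulVec_transpose,
          Matrix.transpose_transpose, dotProduct_comm]
      have e5 : (Lᵀ *ᵥ a) ⬝ᵥ (Sig *ᵥ (Lᵀ *ᵥ a)) = a ⬝ᵥ ((L * Sig * Lᵀ) *ᵥ a) := by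
        rw [← Matrix.mulVec_mulVec, ← Matrix.mulVec_mulVec,
          Matrix.dotProduct_mulVec a, ← Matrix.mulVec_transpose]
      have e6 : a ⬝ᵥ (G *ᵥ a) = a ⬝ᵥ (L *ᵥ x) := by rw [hGa]
      rw [hwdef, Matrix.mulVec_sub, sub_dotProduct, dotProduct_sub,
        dotProduct_sub, Matrix.sub_mulVec, dotProduct_sub,
        e2, e3, e4, e5, e6]
      ring
    show a ⬝ᵥ (L *ᵥ x) ≤ 1
    have hx1 : x ⬝ᵥ s ≤ 1 := hx
    linarith
  · show M *ᵥ (Sig *ᵥ (Mᵀ *ᵥ a)) = L *ᵥ x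
    rw [Matrix.mulVec_mulVec, Matrix.mulVec_mulVec, ← hGdef, hGa]
end
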